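/- arXiv:1010.4595 — 2 statements merged into one kernel-verified Lean document; each statement's English description precedes it below -/
import Mathlib

section
/- If λ = 1 + ε with ε → 0⁺ and λ* = λ(1 − ρ_λ), then λ* = 1 − ε + O(ε²), i.e. there exist constants C, ε₀ > 0 such that |λ* − (1 − ε)| ≤ Cε² for 0 < ε < ε₀. -/
/-!
Put `λ = 1 + ε` and `x = λρ`. Then `λ* = λ - x`, and `x` solves `x = λ (1 - e^{-x})`.
The alternating Taylor bounds `x - x²/2 ≤ 1 - e^{-x} ≤ x - x²/2 + x³/6` turn this, after
dividing by `x`, into `λ x / 2 ≥ ε` and `λ (x/2 - x²/6) ≤ ε`. The second forces `x ≤ 4ε`, and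
then both together pin `x` to `2ε + O(ε²)`, i.e. `λ* = 1 - ε + O(ε²)`.
-/

open Real Set

lemma Real.exp_neg_le_quadratic_of_nonneg {x : ℝ} (hx : 0 ≤ x) :
    exp (-x) ≤ 1 - x + x ^ 2 / 2 := by
  have hderiv (t : ℝ) :
      HasDerivAt (fun t ↦ 1 - t + t ^ 2 / 2 - exp (-t)) (-1 + t + exp (-t)) t := by
    refine ((((hasDerivAt_id t).const_sub 1).add ((hasDerivAt_pow 2 t).div_const 2)).sub
      (hasDerivAt_neg t).exp).congr_deriv ?_
    push_cast; ring
  have hmono := monotone_of_hasDerivAt_nonneg hderiv fun t ↦ show 0 ≤ -1 + t + exp (-t) by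
    linarith [one_sub_le_exp_neg t]
  simpa using hmono hx

lemma Real.cubic_le_exp_neg_of_nonneg {x : ℝ} (hx : 0 ≤ x) :
    1 - x + x ^ 2 / 2 - x ^ 3 / 6 ≤ exp (-x) := by
  have hderiv (t : ℝ) : HasDerivAt (fun t ↦ exp (-t) - (1 - t + t ^ 2 / 2 - t ^ 3 / 6))
      (1 - t + t ^ 2 / 2 - exp (-t)) t := by
    refine ((hasDerivAt_neg t).exp.sub ((((hasDerivAt_id t).const_sub 1).add
      ((hasDerivAt_pow 2 t).div_const 2)).sub ((hasDerivAt_pow 3 t).div_const 6))).congr_deriv ?_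
    push_cast; ring
  have hmono : MonotoneOn (fun t ↦ exp (-t) - (1 - t + t ^ 2 / 2 - t ^ 3 / 6)) (Ici 0) := by
    refine monotoneOn_of_hasDerivWithinAt_nonneg (convex_Ici 0)
      (fun t _ ↦ (hderiv t).continuousAt.continuousWithinAt)
      (fun t _ ↦ (hderiv t).hasDerivWithinAt) fun t ht ↦ ?_
    rw [interior_Ici] at ht
    linarith [exp_neg_le_quadratic_of_nonneg ht.le]
  simpa using hmono (mem_Ici.2 le_rfl) hx hx

lemma abs_sub_two_mul_le_of_eq_mul_one_sub_exp_neg {ε x : ℝ} (hε : 0 ≤ ε) (hx₀ : 0 < x)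
    (hx : x ≤ 3 / 2) (h : x = (1 + ε) * (1 - exp (-x))) : |x - 2 * ε| ≤ 6 * ε ^ 2 := by
  have hlower : (1 + ε) * (1 - x / 2) ≤ 1 := by
    refine le_of_mul_le_mul_left ?_ hx₀
    calc x * ((1 + ε) * (1 - x / 2)) = (1 + ε) * (x - x ^ 2 / 2) := by ring
      _ ≤ (1 + ε) * (1 - exp (-x)) := by
        gcongr _ * ?_; linarith [exp_neg_le_quadratic_of_nonneg hx₀.le]
      _ = x * 1 := by rw [← h, mul_one]
  have hupper : 1 ≤ (1 + ε) * (1 - x / 2 + x ^ 2 / 6) := by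
    refine le_of_mul_le_mul_left ?_ hx₀
    calc x * 1 = (1 + ε) * (1 - exp (-x)) := by rw [← h, mul_one]
      _ ≤ (1 + ε) * (x - x ^ 2 / 2 + x ^ 3 / 6) := by
        gcongr _ * ?_; linarith [cubic_le_exp_neg_of_nonneg hx₀.le]
      _ = x * ((1 + ε) * (1 - x / 2 + x ^ 2 / 6)) := by ring
  have hx_le : x ≤ 4 * ε := by nlinarith
  rw [abs_le]
  constructor <;> nlinarith

theorem dual_asymptotics :
    ∃ C ε₀ : ℝ, 0 < C ∧ 0 < ε₀ ∧
      ∀ ε ρ : ℝ, 0 < ε → ε < ε₀ → 0 < ρ →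
        1 - ρ = Real.exp (-(1 + ε) * ρ) →
          |(1 + ε) * (1 - ρ) - (1 - ε)| ≤ C * ε ^ 2 := by
  refine ⟨6, 1 / 2, by norm_num, by norm_num, fun ε ρ hε hε₀ hρ hfix => ?_⟩
  have hρ₁ : ρ < 1 := by linarith [exp_pos (-(1 + ε) * ρ)]
  have hx : (1 + ε) * ρ = (1 + ε) * (1 - exp (-((1 + ε) * ρ))) := by
    rw [← neg_mul, ← hfix, sub_sub_cancel]
  have hbound := abs_sub_two_mul_le_of_eq_mul_one_sub_exp_neg hε.le (by positivity)
    (by nlinarith) hx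
  calc |(1 + ε) * (1 - ρ) - (1 - ε)| = |(1 + ε) * ρ - 2 * ε| := by
        rw [← abs_neg]; ring_nf
    _ ≤ 6 * ε ^ 2 := hbound
end

section
/- With p = λ/n, λ > 1 fixed, ρ = ρ_λ, t₁ = ⌊ρn⌋, and u_t = n e^{−pt}, one has p(1−p) Σ_{t=0}^{t₁−1} (1−p)^{−2t} u_t = nρ/(1−ρ) · (1 + o(1)) as n → ∞, i.e. the ratio of the sum to nρ/(1−ρ) tends to 1. -/
open Filter

private lemma tendsto_p_ne (lam : ℝ) (hlam : 0 < lam) :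
    Tendsto (fun n : ℕ => lam / n) atTop (nhdsWithin 0 {x : ℝ | x ≠ 0}) := by
  refine tendsto_nhdsWithin_of_tendsto_nhds_of_eventually_within _
    (tendsto_const_div_atTop_nhds_zero_nat lam) ?_
  filter_upwards [eventually_gt_atTop 0] with n hn
  have h0 : (0:ℝ) < n := by exact_mod_cast hn
  exact ne_of_gt (div_pos hlam h0)

private lemma slope_g : Tendsto (fun x : ℝ => (Real.exp (-x) / (1 - x) ^ 2 - 1) / x)
    (nhdsWithin 0 {x : ℝ | x ≠ 0}) (nhds 1) := by
  have h1 : HasDerivAt (fun x : ℝ => Real.exp (-x)) (-1) 0 := by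
    simpa using (hasDerivAt_neg (0:ℝ)).exp
  have h2 : HasDerivAt (fun x : ℝ => (1 - x) ^ 2) (-2) 0 := by
    have := ((hasDerivAt_id (0:ℝ)).const_sub 1).pow 2
    norm_num at this
    exact this
  have h := h1.div h2 (by norm_num)
  have h' : HasDerivAt (fun x : ℝ => Real.exp (-x) / (1 - x) ^ 2) 1 0 := by
    exact h.congr_deriv (by norm_num)
  have ht := hasDerivAt_iff_tendsto_slope.mp h'
  refine ht.congr fun x => ?_
  simp [slope_def_field]

private lemma slope_log : Tendsto (fun x : ℝ => Real.log (1 - x) / x)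
    (nhdsWithin 0 {x : ℝ | x ≠ 0}) (nhds (-1)) := by
  have h : HasDerivAt (fun x : ℝ => Real.log (1 - x)) (-1) 0 := by
    have := (((hasDerivAt_id (0:ℝ)).const_sub 1).log (by norm_num))
    norm_num at this
    exact this
  have ht := hasDerivAt_iff_tendsto_slope.mp h
  refine ht.congr fun x => ?_
  simp [slope_def_field]

theorem variance_sum_ratio (lam ρ : ℝ) (hlam : 1 < lam)
    (hρ : 0 < ρ) (hρ1 : ρ < 1) (hfix : 1 - ρ = Real.exp (-lam * ρ)) :
    Tendsto (fun n : ℕ =>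
        ((lam / n) * (1 - lam / n) *
          ∑ t ∈ Finset.range ⌊ρ * n⌋₊,
            ((n : ℝ) * Real.exp (-(lam / n) * t)) / (1 - lam / n) ^ (2 * t)) /
        ((n : ℝ) * ρ / (1 - ρ)))
      atTop (nhds 1) := by
  have hlam0 : (0:ℝ) < lam := lt_trans one_pos hlam
  have hρ1' : (0:ℝ) < 1 - ρ := by linarith
  set p : ℕ → ℝ := fun n => lam / n with hp
  set r : ℕ → ℝ := fun n => Real.exp (-(p n)) / (1 - p n) ^ 2 with hr
  set T : ℕ → ℕ := fun n => ⌊ρ * n⌋₊ with hT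
  -- limits
  have hpne := tendsto_p_ne lam hlam0
  have hp0 : Tendsto p atTop (nhds 0) := tendsto_const_div_atTop_nhds_zero_nat lam
  have hA : Tendsto (fun n => 1 - p n) atTop (nhds 1) := by
    simpa using (tendsto_const_nhds (x := (1:ℝ)) (f := atTop)).sub hp0
  have hTn : Tendsto (fun n : ℕ => (T n : ℝ) / n) atTop (nhds ρ) := by
    exact (tendsto_nat_floor_mul_div_atTop hρ.le).comp tendsto_natCast_atTop_atTop
  have hpT : Tendsto (fun n : ℕ => p n * (T n : ℝ)) atTop (nhds (lam * ρ)) := by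
    have := hTn.const_mul lam
    refine this.congr fun n => ?_
    simp only [hp]; ring
  have hnlog : Tendsto (fun n : ℕ => (n:ℝ) * Real.log (1 - p n)) atTop (nhds (-lam)) := by
    have h1 : Tendsto (fun n : ℕ => lam * (Real.log (1 - p n) / p n)) atTop
        (nhds (lam * (-1))) := (slope_log.comp hpne).const_mul lam
    rw [show -lam = lam * (-1) by ring]
    refine h1.congr' ?_
    filter_upwards [eventually_gt_atTop 0] with n hn
    have hn0 : (n:ℝ) ≠ 0 := by positivity
    have hpn : p n ≠ 0 := by
      simp only [hp]; positivity
    field_simp [hp]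
    have hpn' : p n * n = lam := by simp only [hp]; exact div_mul_cancel₀ lam hn0
    linear_combination (-Real.log (1 - p n)) * hpn'
  have hTlog : Tendsto (fun n : ℕ => (T n : ℝ) * Real.log (1 - p n)) atTop
      (nhds (ρ * (-lam))) := by
    have h1 := hTn.mul hnlog
    refine h1.congr' ?_
    filter_upwards [eventually_gt_atTop 0] with n hn
    have hn0 : (n:ℝ) ≠ 0 := by positivity
    field_simp
  -- eventually facts
  have hev : ∀ᶠ n : ℕ in atTop, 2 * lam < (n:ℝ) := by
    have := tendsto_natCast_atTop_atTop (R := ℝ)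
    exact this.eventually_gt_atTop (2 * lam)
  have key : ∀ n : ℕ, 2 * lam < (n:ℝ) →
      0 < p n ∧ p n < 1/2 ∧ 0 < 1 - p n ∧ 1 < r n := by
    intro n hn
    have hn0 : (0:ℝ) < n := lt_trans (by linarith) hn
    have hp0' : 0 < p n := div_pos hlam0 hn0
    have hp2 : p n < 1/2 := by
      rw [hp, div_lt_iff₀ hn0]; linarith
    have h1p : 0 < 1 - p n := by linarith
    refine ⟨hp0', hp2, h1p, ?_⟩
    have hsq : (1 - p n)^2 < 1 - p n := by nlinarith
    have hle : 1 - p n ≤ Real.exp (-(p n)) := by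
      have := Real.add_one_le_exp (-(p n)); linarith
    rw [hr, lt_div_iff₀ (by positivity)]
    nlinarith
  have hlogr : Tendsto (fun n : ℕ => (T n : ℝ) * Real.log (r n)) atTop
      (nhds (lam * ρ)) := by
    have h1 : Tendsto (fun n : ℕ => -(p n * (T n:ℝ)) - 2 * ((T n:ℝ) * Real.log (1 - p n)))
        atTop (nhds (-(lam * ρ) - 2 * (ρ * (-lam)))) := (hpT.neg).sub (hTlog.const_mul 2)
    rw [show lam * ρ = -(lam * ρ) - 2 * (ρ * (-lam)) by ring]
    refine h1.congr' ?_
    filter_upwards [hev] with n hn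
    obtain ⟨hp0', hp2, h1p, hr1⟩ := key n hn
    rw [hr]
    rw [Real.log_div (Real.exp_ne_zero _) (by positivity), Real.log_exp,
      Real.log_pow]
    push_cast
    ring
  have hrT : Tendsto (fun n : ℕ => (r n) ^ (T n)) atTop (nhds ((1 - ρ)⁻¹)) := by
    have h1 : Tendsto (fun n : ℕ => Real.exp ((T n : ℝ) * Real.log (r n))) atTop
        (nhds (Real.exp (lam * ρ))) := (Real.continuous_exp.tendsto _).comp hlogr
    have he : Real.exp (lam * ρ) = (1 - ρ)⁻¹ := by
      rw [hfix, neg_mul, Real.exp_neg, inv_inv]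
    rw [← he]
    refine h1.congr' ?_
    filter_upwards [hev] with n hn
    obtain ⟨hp0', hp2, h1p, hr1⟩ := key n hn
    rw [← Real.log_pow, Real.exp_log (by positivity)]
  have hB : Tendsto (fun n : ℕ => p n / (r n - 1)) atTop (nhds 1) := by
    have h1 : Tendsto (fun n : ℕ => (r n - 1) / p n) atTop (nhds 1) :=
      slope_g.comp hpne
    have h2 := h1.inv₀ one_ne_zero
    rw [inv_one] at h2
    refine h2.congr fun n => ?_
    rw [inv_div]
  -- final combination
  have hG : Tendsto (fun n : ℕ =>
      (1 - p n) * (p n / (r n - 1)) * ((r n) ^ (T n) - 1) * ((1 - ρ) / ρ))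
      atTop (nhds 1) := by
    have h1 := ((hA.mul hB).mul (hrT.sub (tendsto_const_nhds (x := (1:ℝ)) (f := atTop)))).mul
      (tendsto_const_nhds (x := (1 - ρ)/ρ) (f := atTop))
    have : (1:ℝ) * 1 * ((1 - ρ)⁻¹ - 1) * ((1 - ρ)/ρ) = 1 := by
      field_simp
      ring
    rwa [this] at h1
  refine hG.congr' ?_
  filter_upwards [hev] with n hn
  obtain ⟨hp0', hp2, h1p, hr1⟩ := key n hn
  have hn0 : (0:ℝ) < n := lt_trans (by linarith) hn
  have hsum : ∑ t ∈ Finset.range (T n),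
      ((n : ℝ) * Real.exp (-(lam / n) * t)) / (1 - lam / n) ^ (2 * t)
      = (n:ℝ) * (((r n) ^ (T n) - 1) / (r n - 1)) := by
    have hterm : ∀ t : ℕ, ((n : ℝ) * Real.exp (-(lam / n) * t)) / (1 - lam / n) ^ (2 * t)
        = (n:ℝ) * (r n) ^ t := by
      intro t
      have he : Real.exp (-(lam / n) * t) = (Real.exp (-(p n))) ^ t := by
        rw [show (-(lam / n) * (t:ℝ)) = (t:ℝ) * (-(p n)) by rw [hp]; ring,
          Real.exp_nat_mul]
      rw [he, hr, pow_mul, div_pow, mul_div_assoc]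
    rw [Finset.sum_congr rfl (fun t _ => hterm t), ← Finset.mul_sum,
      geom_sum_eq (ne_of_gt hr1)]
  rw [hsum]
  have hrn1 : r n - 1 ≠ 0 := by linarith
  have hn0' : (n:ℝ) ≠ 0 := ne_of_gt hn0
  have hρ0 : ρ ≠ 0 := ne_of_gt hρ
  have hρ1'' : (1:ℝ) - ρ ≠ 0 := ne_of_gt hρ1'
  rw [hp]
  field_simp
end
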